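/- There exists ε with |ε| ≤ 1 such that 1/c_i = (1/u_i)(1 − 1/(u_i u_{i+1})) + ε·(1/(u_i² u_{i+1}²))·(1/u_i + 1/u_{i+2}). -/

import Mathlib

open Real

/-!
Since `√D` is irrational, every complete quotient `c i` exceeds its floor `u i`, so
`c (i + 1) > 1` and `c i = u i + 1 / (u (i + 1) + 1 / c (i + 2))` with `u (i + 2) < c (i + 2)`.
For this three-level fraction the error of the two-term approximation is the explicit positive
quantity `(a + y) / (a² b (a b y + a + y))`, and `u (i + 2) ≤ c (i + 2)` bounds it by
`(1 / (a² b²)) (1 / a + 1 / d)`.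
-/

lemma exists_abs_le_one_eq_mul_of_abs_le {e B : ℝ} (hB : 0 < B) (h : |e| ≤ B) :
    ∃ ε : ℝ, |ε| ≤ 1 ∧ e = ε * B :=
  ⟨e / B, by rwa [abs_div, abs_of_pos hB, div_le_one hB], (div_mul_cancel₀ e hB.ne').symm⟩

lemma one_div_add_one_div_add_one_div_sub {a b y : ℝ} (ha : 0 < a) (hb : 0 < b) (hy : 0 < y) :
    1 / (a + 1 / (b + 1 / y)) - (1 / a) * (1 - 1 / (a * b))
      = (a + y) / (a ^ 2 * b * (a * b * y + a + y)) := by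
  field_simp
  ring

lemma exists_abs_le_one_one_div_add_one_div_add_one_div {a b d y : ℝ}
    (ha : 0 < a) (hb : 0 < b) (hd : 0 < d) (hdy : d ≤ y) :
    ∃ ε : ℝ, |ε| ≤ 1 ∧ 1 / (a + 1 / (b + 1 / y)) = (1 / a) * (1 - 1 / (a * b))
      + ε * (1 / (a ^ 2 * b ^ 2)) * (1 / a + 1 / d) := by
  have hy : 0 < y := hd.trans_le hdy
  have hbound : |(a + y) / (a ^ 2 * b * (a * b * y + a + y))|
      ≤ 1 / (a ^ 2 * b ^ 2) * (1 / a + 1 / d) := by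
    rw [abs_of_pos (by positivity), div_le_iff₀ (by positivity)]
    field_simp
    nlinarith [mul_le_mul_of_nonneg_left hdy (by positivity : 0 ≤ a ^ 2 * b)]
  obtain ⟨ε, hε, he⟩ := exists_abs_le_one_eq_mul_of_abs_le (by positivity) hbound
  refine ⟨ε, hε, ?_⟩
  rw [mul_assoc, ← he, ← one_div_add_one_div_add_one_div_sub ha hb hy]
  ring

lemma not_isSquare_of_mod_four {D : ℕ} (hD4 : D % 4 = 2 ∨ D % 4 = 3) : ¬IsSquare D := by
  rintro ⟨r, rfl⟩
  rcases Nat.even_or_odd r with ⟨k, rfl⟩ | ⟨k, rfl⟩ <;> ring_nf at hD4 <;> omega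

lemma complete_quotient_eq_add_one_div {u : ℤ → ℤ} {c : ℤ → ℝ}
    (hcrec : ∀ i : ℤ, 0 ≤ i → c (i + 1) = 1 / (c i - u i)) (i : ℤ) (hi : 0 ≤ i) :
    c i = u i + 1 / c (i + 1) := by
  rw [hcrec i hi, one_div_one_div]
  ring

section CompleteQuotients

variable {u : ℤ → ℤ} {c : ℤ → ℝ}
  (hu : ∀ i : ℤ, 0 ≤ i → u i = ⌊c i⌋)
  (hcrec : ∀ i : ℤ, 0 ≤ i → c (i + 1) = 1 / (c i - u i))

include hu hcrec

lemma irrational_complete_quotient (h0 : Irrational (c 0)) (i : ℤ) (hi : 0 ≤ i) :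
    Irrational (c i) := by
  induction i, hi using Int.leInduction with
  | base => exact h0
  | succ j hj ih =>
    rw [hcrec j hj, hu j hj, one_div]
    exact (ih.sub_intCast _).inv

lemma floor_lt_complete_quotient (h0 : Irrational (c 0)) (i : ℤ) (hi : 0 ≤ i) :
    (u i : ℝ) < c i := by
  rw [hu i hi]
  exact (Int.floor_le _).lt_of_ne ((irrational_complete_quotient hu hcrec h0 i hi).ne_int _).symm

lemma one_lt_complete_quotient_succ (h0 : Irrational (c 0)) (i : ℤ) (hi : 0 ≤ i) :
    1 < c (i + 1) := by
  have hlt : c i - u i < 1 := by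
    rw [hu i hi]
    linarith [Int.lt_floor_add_one (c i)]
  rw [hcrec i hi]
  exact one_lt_one_div (sub_pos.mpr (floor_lt_complete_quotient hu hcrec h0 i hi)) hlt

lemma one_le_partial_quotient (h0 : Irrational (c 0)) (h1 : 1 < c 0) (i : ℤ) (hi : 0 ≤ i) :
    (1 : ℝ) ≤ u i := by
  have hci : 1 ≤ c i := by
    obtain rfl | hi' := hi.eq_or_lt
    · exact h1.le
    · simpa using (one_lt_complete_quotient_succ hu hcrec h0 (i - 1) (by omega)).le
  rw [hu i hi]
  exact_mod_cast Int.le_floor.mpr (by exact_mod_cast hci)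

end CompleteQuotients

theorem stmt6_general (D : ℕ) (hD4 : D % 4 = 2 ∨ D % 4 = 3)
    (u : ℤ → ℤ) (c : ℤ → ℝ)
    (hc0 : c 0 = Real.sqrt D)
    (hu : ∀ i : ℤ, 0 ≤ i → u i = ⌊c i⌋)
    (hcrec : ∀ i : ℤ, 0 ≤ i → c (i + 1) = 1 / (c i - u i)) :
    ∀ i : ℤ, 0 ≤ i → ∃ ε : ℝ, |ε| ≤ 1 ∧
      1 / c i = (1 / (u i : ℝ)) * (1 - 1 / ((u i : ℝ) * (u (i + 1) : ℝ)))
        + ε * (1 / ((u i : ℝ) ^ 2 * (u (i + 1) : ℝ) ^ 2)) * (1 / (u i : ℝ) + 1 / (u (i + 2) : ℝ)) := by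
  intro i hi
  have h0 : Irrational (c 0) := hc0 ▸ irrational_sqrt_natCast_iff.mpr (not_isSquare_of_mod_four hD4)
  have h1 : 1 < c 0 := by
    rw [hc0, Real.lt_sqrt zero_le_one]
    exact_mod_cast (by omega : 1 ^ 2 < D)
  have hpos (k : ℤ) (hk : 0 ≤ k) : (0 : ℝ) < u k :=
    one_pos.trans_le (one_le_partial_quotient hu hcrec h0 h1 k hk)
  have hexpand : c i = u i + 1 / (u (i + 1) + 1 / c (i + 2)) := by
    rw [complete_quotient_eq_add_one_div hcrec i hi,
      complete_quotient_eq_add_one_div hcrec (i + 1) (by omega), add_assoc]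
    norm_num
  rw [hexpand]
  exact exists_abs_le_one_one_div_add_one_div_add_one_div (hpos i hi) (hpos (i + 1) (by omega))
    (hpos (i + 2) (by omega)) (floor_lt_complete_quotient hu hcrec h0 (i + 2) (by omega)).le

theorem stmt6 (D : ℕ) (hDsf : Squarefree D) (hD4 : D % 4 = 2 ∨ D % 4 = 3)
    (u : ℤ → ℤ) (c : ℤ → ℝ)
    (hc0 : c 0 = Real.sqrt D)
    (hu : ∀ i : ℤ, 0 ≤ i → u i = ⌊c i⌋)
    (hcrec : ∀ i : ℤ, 0 ≤ i → c (i + 1) = 1 / (c i - u i)) :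
    ∀ i : ℤ, 0 ≤ i → ∃ ε : ℝ, |ε| ≤ 1 ∧
      1 / c i = (1 / (u i : ℝ)) * (1 - 1 / ((u i : ℝ) * (u (i + 1) : ℝ)))
        + ε * (1 / ((u i : ℝ) ^ 2 * (u (i + 1) : ℝ) ^ 2)) * (1 / (u i : ℝ) + 1 / (u (i + 2) : ℝ)) :=
  stmt6_general D hD4 u c hc0 hu hcrec
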